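/- If G is a finite group generated by elements a and b, G' is cyclic, and k is an integer coprime to the order of a, then G' is generated by [a^k, b]. -/

import Mathlib

open Subgroup

open scoped commutatorElement

/-- In a finite cyclic group, divisibility of orders implies membership in zpowers. -/
lemma mem_zpowers_of_orderOf_dvd {α : Type*} [Group α] [Finite α] [IsCyclic α]
    {x y : α} (h : orderOf x ∣ orderOf y) : x ∈ zpowers y := by
  classical
  have : Fintype α := Fintype.ofFinite α
  have hd : 0 < orderOf y := orderOf_pos y
  have hcard : (Finset.univ.filter fun z : α => z ^ (orderOf y) = 1).card ≤ orderOf y :=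
    IsCyclic.card_pow_eq_one_le hd
  have hsub : (zpowers y : Set α).toFinset ⊆
      Finset.univ.filter fun z : α => z ^ (orderOf y) = 1 := by
    intro z hz
    simp only [Set.mem_toFinset, SetLike.mem_coe] at hz
    simp only [Finset.mem_filter, Finset.mem_univ, true_and]
    exact orderOf_dvd_iff_pow_eq_one.mp (orderOf_dvd_of_mem_zpowers hz)
  have hcard2 : (zpowers y : Set α).toFinset.card = orderOf y := by
    rw [Set.toFinset_card]
    simpa using Fintype.card_zpowers (x := y)
  have heq : (zpowers y : Set α).toFinset =
      Finset.univ.filter fun z : α => z ^ (orderOf y) = 1 :=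
    Finset.eq_of_subset_of_card_le hsub (by omega)
  have hx : x ∈ Finset.univ.filter fun z : α => z ^ (orderOf y) = 1 := by
    simp only [Finset.mem_filter, Finset.mem_univ, true_and]
    exact orderOf_dvd_iff_pow_eq_one.mp h
  rw [← heq] at hx
  simpa using hx

lemma commutator_eq_closure_commutator_aux
    (G : Type*) [Group G] [Fintype G] (a b : G)
    (hgen : Subgroup.closure {a, b} = ⊤)
    (hcyc : IsCyclic (commutator G)) :
    commutator G = Subgroup.closure {⁅a, b⁆} := by
  classical
  set c := ⁅a, b⁆ with hc
  set H := Subgroup.closure {c} with hH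
  -- H ≤ commutator G
  have hle : H ≤ commutator G := by
    rw [hH, Subgroup.closure_le]
    intro x hx
    rcases hx with rfl
    exact commutator_mem_commutator (Subgroup.mem_top a) (Subgroup.mem_top b)
  have hcmem : c ∈ commutator G :=
    commutator_mem_commutator (Subgroup.mem_top a) (Subgroup.mem_top b)
  -- conjugates of c lie in H
  have hconj : ∀ g : G, g * c * g⁻¹ ∈ H := by
    intro g
    have hc'mem : g * c * g⁻¹ ∈ commutator G :=
      (Subgroup.commutator_normal ⊤ ⊤).conj_mem c hcmem g
    have hord : orderOf (g * c * g⁻¹) = orderOf c := by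
      have := orderOf_injective (MulAut.conj g).toMonoidHom
        (MulAut.conj g).injective c
      simpa [MulAut.conj_apply] using this
    -- in commutator G (cyclic), same order ⇒ mem zpowers
    have : (⟨g * c * g⁻¹, hc'mem⟩ : commutator G) ∈
        zpowers (⟨c, hcmem⟩ : commutator G) := by
      apply mem_zpowers_of_orderOf_dvd
      rw [Subgroup.orderOf_mk, Subgroup.orderOf_mk, hord]
    obtain ⟨m, hm⟩ := this
    have hm' : c ^ m = g * c * g⁻¹ := congrArg Subtype.val hm
    rw [← hm']
    exact Subgroup.zpow_mem H (Subgroup.subset_closure rfl) m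
  -- H is normal
  have hnormal : H.Normal := by
    constructor
    intro n hn g
    obtain ⟨m, hm⟩ := Subgroup.mem_closure_singleton.mp hn
    rw [← hm]
    have : g * c ^ m * g⁻¹ = (g * c * g⁻¹) ^ m := by rw [conj_zpow]
    rw [this]
    exact Subgroup.zpow_mem H (hconj g) m
  -- quotient G ⧸ H is abelian on generators
  have hab : ∀ x y : G, ⁅x, y⁆ ∈ H := by
    have key : ∀ x y : G, Commute ((QuotientGroup.mk' H) x) ((QuotientGroup.mk' H) y) := by
      have hgen' : ∀ z : G ⧸ H, z ∈ Subgroup.closure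
          {(QuotientGroup.mk' H) a, (QuotientGroup.mk' H) b} := by
        intro z
        obtain ⟨g, rfl⟩ := QuotientGroup.mk'_surjective H z
        have hg : g ∈ Subgroup.closure ({a, b} : Set G) := hgen ▸ Subgroup.mem_top g
        have : (QuotientGroup.mk' H) g ∈ Subgroup.map (QuotientGroup.mk' H)
            (Subgroup.closure {a, b}) := Subgroup.mem_map_of_mem _ hg
        rwa [MonoidHom.map_closure, Set.image_insert_eq, Set.image_singleton] at this
      have hcomm : Commute ((QuotientGroup.mk' H) a) ((QuotientGroup.mk' H) b) := by
        rw [← commutatorElement_eq_one_iff_commute, ← map_commutatorElement]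
        rw [QuotientGroup.mk'_apply, QuotientGroup.eq_one_iff]
        exact Subgroup.subset_closure rfl
      intro x y
      have hx := hgen' ((QuotientGroup.mk' H) x)
      have hy := hgen' ((QuotientGroup.mk' H) y)
      -- prove commutativity by double closure induction
      revert hy
      refine Subgroup.closure_induction (fun u hu => ?_) (fun _ => ?_)
        (fun u v _ _ hu hv _ => ?_) (fun u _ hu _ => ?_) hx
      · refine fun hy => Subgroup.closure_induction (fun v hv _ => ?_) (fun _ => Commute.one_right _)
          (fun v w _ _ hv hw hu => Commute.mul_right (hv hu) (hw hu))
          (fun v _ hv hu => (hv hu).inv_right) hy hu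
        rcases hu with rfl | rfl <;> rcases hv with rfl | rfl
        · exact Commute.refl _
        · exact hcomm
        · exact hcomm.symm
        · exact Commute.refl _
      · exact Commute.one_left _
      · exact Commute.mul_left (hu (hgen' _)) (hv (hgen' _))
      · exact (hu (hgen' _)).inv_left
    intro x y
    have := key x y
    rw [← commutatorElement_eq_one_iff_commute, ← map_commutatorElement,
      QuotientGroup.mk'_apply, QuotientGroup.eq_one_iff] at this
    exact this
  have hge : commutator G ≤ H := by
    rw [commutator_def, Subgroup.commutator_le]
    exact fun g₁ _ g₂ _ => hab g₁ g₂
  exact le_antisymm hge hle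

theorem commutator_eq_closure_commutator_zpow
    (G : Type*) [Group G] [Fintype G] (a b : G) (k : ℤ)
    (hgen : Subgroup.closure {a, b} = ⊤)
    (hcyc : IsCyclic (commutator G))
    (hk : Int.gcd k (orderOf a) = 1) :
    commutator G = Subgroup.closure {⁅a ^ k, b⁆} := by
  have hgen' : Subgroup.closure ({a ^ k, b} : Set G) = ⊤ := by
    rw [eq_top_iff, ← hgen, Subgroup.closure_le]
    have hA : a ∈ Subgroup.closure ({a ^ k, b} : Set G) := by
      have hcop : IsCoprime k (orderOf a : ℤ) := Int.isCoprime_iff_gcd_eq_one.mpr hk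
      obtain ⟨u, v, huv⟩ := hcop
      have han : (a : G) ^ (orderOf a : ℤ) = 1 := by
        rw [zpow_natCast]; exact pow_orderOf_eq_one a
      have : a = (a ^ k) ^ u := by
        calc a = a ^ (u * k + v * (orderOf a : ℤ)) := by rw [huv, zpow_one]
        _ = (a ^ k) ^ u * ((a ^ (orderOf a : ℤ)) ^ v) := by
              rw [zpow_add, ← zpow_mul, ← zpow_mul, mul_comm k u, mul_comm (orderOf a : ℤ) v]
        _ = (a ^ k) ^ u := by rw [han, one_zpow, mul_one]
      have hmem : (a ^ k) ^ u ∈ Subgroup.closure ({a ^ k, b} : Set G) :=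
        Subgroup.zpow_mem _ (Subgroup.subset_closure (by simp)) u
      rwa [← this] at hmem
    intro x hx
    rcases hx with h | h
    · exact h ▸ hA
    · exact h ▸ Subgroup.subset_closure (by simp)
  exact commutator_eq_closure_commutator_aux G (a ^ k) b hgen' hcyc
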